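/- Let 0 < q < 1 and j ≥ 1. Then the conditional entropy of an i.i.d. Bernoulli(q) vector of length 2^j given even parity satisfies the recursion H₀^j(q) = h(q̄_j(q)) + (1 − q̄_j(q)) · 2 · H₀^{j−1}(q) + q̄_j(q) · 2 · H₁^{j−1}(q). -/

import Mathlib

open Finset

/-- Hamming weight of a binary string `e ∈ {0,1}^n`. -/
def wt {n : ℕ} (e : Fin n → Bool) : ℕ := (Finset.univ.filter fun i => e i = true).card

/-- i.i.d. Bernoulli(q) probability of the binary string `e ∈ {0,1}^n`. -/
noncomputable def Pq (q : ℝ) {n : ℕ} (e : Fin n → Bool) : ℝ :=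
  q ^ wt e * (1 - q) ^ (n - wt e)

/-- `p̄_j(q) = (1 − (1−2q)^{2^j})/2`. -/
noncomputable def pbar (q : ℝ) (j : ℕ) : ℝ := (1 - (1 - 2 * q) ^ (2 ^ j)) / 2

/-- `q̄_j(q) = p̄_{j−1}(q)²/(1 − p̄_j(q))`. -/
noncomputable def qbar (q : ℝ) (j : ℕ) : ℝ := (pbar q (j - 1)) ^ 2 / (1 - pbar q j)

/-- Binary entropy function (base 2), with `h(0) = h(1) = 0`. -/
noncomputable def binEnt (x : ℝ) : ℝ := -(x * Real.logb 2 x) - (1 - x) * Real.logb 2 (1 - x)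

/-- `Π_b^j(q)`: probability that an i.i.d. Bernoulli(q) vector of length `2^j` has parity `b`. -/
noncomputable def Pib (q : ℝ) (j : ℕ) (b : ℕ) : ℝ := if b = 1 then pbar q j else 1 - pbar q j

/-- `H_b^j(q)`: Shannon entropy (base 2) of an i.i.d. Bernoulli(q) vector of length `2^j`
conditioned on its parity being `b`. -/
noncomputable def Hcond (q : ℝ) (j : ℕ) (b : ℕ) : ℝ :=
  -∑ e ∈ Finset.univ.filter (fun e : Fin (2 ^ j) → Bool => wt e % 2 = b),
      (Pq q e / Pib q j b) * Real.logb 2 (Pq q e / Pib q j b)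

/-!
Split a vector of length `2^(m+1)` into halves `e₁, e₂` of length `2^m`. It has even parity
iff both halves have the same parity `c`, and its probability is `P(e₁) P(e₂)`. Conditioned on
even parity, `c = 1` has probability `Π₁^m(q)² / Π₀^(m+1)(q) = q̄_{m+1}(q)`, and given `c` the
halves are independent with the parity-`c` conditional law; the chain rule for entropy gives
`h(q̄) + 2 H_c^m` in each branch. Working with `negMulLog`, for which
`negMulLog (x * y) = y * negMulLog x + x * negMulLog y` holds unconditionally, this chain rule
is a finite computation.
-/

open Real

lemma prod_ite_eq_pow_wt_mul_pow {R : Type*} [CommMonoid R] (x y : R) {n : ℕ}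
    (e : Fin n → Bool) : ∏ i, (if e i = true then x else y) = x ^ wt e * y ^ (n - wt e) := by
  rw [prod_ite, prod_const, prod_const, filter_not, card_sdiff_of_subset (filter_subset _ _),
    card_univ, Fintype.card_fin, wt]

lemma Pq_eq_prod (q : ℝ) {n : ℕ} (e : Fin n → Bool) :
    Pq q e = ∏ i, (if e i = true then q else 1 - q) :=
  (prod_ite_eq_pow_wt_mul_pow q (1 - q) e).symm

lemma sum_pow_wt_mul_pow {R : Type*} [CommSemiring R] (x y : R) (n : ℕ) :
    ∑ e : Fin n → Bool, x ^ wt e * y ^ (n - wt e) = (x + y) ^ n := by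
  simpa [← prod_ite_eq_pow_wt_mul_pow] using
    (Fintype.sum_pow (fun b : Bool => if b = true then x else y) n).symm

lemma sum_Pq (q : ℝ) (n : ℕ) : ∑ e : Fin n → Bool, Pq q e = 1 := by
  simp [Pq, sum_pow_wt_mul_pow]

lemma sum_neg_one_pow_wt_mul_Pq (q : ℝ) (n : ℕ) :
    ∑ e : Fin n → Bool, (-1) ^ wt e * Pq q e = (1 - 2 * q) ^ n := by
  simp_rw [Pq, ← mul_assoc, ← mul_pow, sum_pow_wt_mul_pow]
  ring

def parityClass (n b : ℕ) : Finset (Fin n → Bool) := univ.filter fun e => wt e % 2 = b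

lemma filter_not_even_eq_parityClass_one (n : ℕ) :
    univ.filter (fun e : Fin n → Bool => ¬wt e % 2 = 0) = parityClass n 1 :=
  filter_congr fun _ _ => Nat.mod_two_ne_zero

lemma sum_Pq_parityClass_zero_add_one (q : ℝ) (n : ℕ) :
    ∑ e ∈ parityClass n 0, Pq q e + ∑ e ∈ parityClass n 1, Pq q e = 1 := by
  rw [parityClass, ← filter_not_even_eq_parityClass_one, sum_filter_add_sum_filter_not, sum_Pq]

lemma sum_Pq_parityClass_zero_sub_one (q : ℝ) (n : ℕ) :
    ∑ e ∈ parityClass n 0, Pq q e - ∑ e ∈ parityClass n 1, Pq q e = (1 - 2 * q) ^ n := by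
  rw [← sum_neg_one_pow_wt_mul_Pq, ← sum_filter_add_sum_filter_not univ fun e => wt e % 2 = 0,
    filter_not_even_eq_parityClass_one, sub_eq_add_neg, ← sum_neg_distrib, parityClass]
  congr 1 <;> refine sum_congr rfl fun e he => ?_ <;>
    simp [neg_one_pow_eq_pow_mod_two (n := wt e), (mem_filter.1 he).2]

lemma sum_Pq_parityClass_eq_Pib (q : ℝ) (j : ℕ) {b : ℕ} (hb : b < 2) :
    ∑ e ∈ parityClass (2 ^ j) b, Pq q e = Pib q j b := by
  have hsum := sum_Pq_parityClass_zero_add_one q (2 ^ j)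
  have hdiff := sum_Pq_parityClass_zero_sub_one q (2 ^ j)
  interval_cases b <;> simp only [Pib, pbar] <;> norm_num <;> linarith

lemma wt_append {a b : ℕ} (e₁ : Fin a → Bool) (e₂ : Fin b → Bool) :
    wt (Fin.append e₁ e₂) = wt e₁ + wt e₂ := by
  simp only [wt, card_filter, Fin.sum_univ_add, Fin.append_left, Fin.append_right]

lemma Pq_append (q : ℝ) {a b : ℕ} (e₁ : Fin a → Bool) (e₂ : Fin b → Bool) :
    Pq q (Fin.append e₁ e₂) = Pq q e₁ * Pq q e₂ := by
  simp only [Pq_eq_prod, Fin.prod_univ_add, Fin.append_left, Fin.append_right]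

lemma sum_parityClass_add_zero {M : Type*} [AddCommMonoid M] {a b : ℕ}
    (f : (Fin (a + b) → Bool) → M) :
    ∑ e ∈ parityClass (a + b) 0, f e =
      ∑ c ∈ range 2, ∑ e₁ ∈ parityClass a c, ∑ e₂ ∈ parityClass b c, f (Fin.append e₁ e₂) := by
  rw [parityClass, sum_filter, ← (Fin.appendEquiv a b).sum_comp, Fintype.sum_prod_type]
  simp only [parityClass, sum_filter, Fin.appendEquiv, Equiv.coe_fn_mk, wt_append, sum_range_succ,
    sum_range_zero, zero_add, ← sum_add_distrib]
  refine sum_congr rfl fun e₁ _ => ?_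
  rcases Nat.mod_two_eq_zero_or_one (wt e₁) with h | h
  · rw [if_pos h, if_neg (by omega), add_zero]
    exact sum_congr rfl fun e₂ _ => if_congr (by omega) rfl rfl
  · rw [if_neg (by omega), if_pos h, zero_add]
    exact sum_congr rfl fun e₂ _ => if_congr (by omega) rfl rfl

lemma sum_sum_negMulLog_mul_div {ι : Type*} (s : Finset ι) (P : ι → ℝ) {A : ℝ}
    (hA : ∑ i ∈ s, P i = A) (hA0 : A ≠ 0) (t : ℝ) :
    ∑ i ∈ s, ∑ k ∈ s, negMulLog (P i * P k / t) =
      negMulLog (A ^ 2 / t) + A ^ 2 / t * 2 * ∑ i ∈ s, negMulLog (P i / A) := by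
  have hx : ∑ i ∈ s, P i / A = 1 := by rw [← sum_div, hA, div_self hA0]
  have key : ∀ i k, negMulLog (P i * P k / t) = P i / A * (P k / A) * negMulLog (A ^ 2 / t) +
      A ^ 2 / t * (P k / A * negMulLog (P i / A) + P i / A * negMulLog (P k / A)) := by
    intro i k
    rw [← negMulLog_mul, ← negMulLog_mul]
    congr 1
    field_simp
  simp only [key, sum_add_distrib, ← mul_sum, ← sum_mul, mul_add, hx]
  ring

lemma Hcond_mul_log_two (q : ℝ) (j b : ℕ) :
    Hcond q j b * log 2 = ∑ e ∈ parityClass (2 ^ j) b, negMulLog (Pq q e / Pib q j b) := by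
  rw [Hcond, ← sum_neg_distrib, sum_mul]
  refine sum_congr rfl fun e _ => ?_
  simp only [negMulLog, logb]
  field_simp

lemma binEnt_eq (x : ℝ) : binEnt x = (negMulLog x + negMulLog (1 - x)) / log 2 := by
  simp only [binEnt, negMulLog, logb]
  ring

lemma pbar_mem_Ioo {q : ℝ} (hq0 : 0 < q) (hq1 : q < 1) (j : ℕ) : pbar q j ∈ Set.Ioo 0 1 := by
  have habs : |1 - 2 * q| < 1 := abs_lt.2 ⟨by linarith, by linarith⟩
  have hpow := pow_lt_one₀ (abs_nonneg _) habs (pow_ne_zero j two_ne_zero)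
  rw [← abs_pow, abs_lt] at hpow
  constructor <;> simp only [pbar] <;> linarith

lemma one_sub_pbar_succ (q : ℝ) (j : ℕ) :
    1 - pbar q (j + 1) = (1 - pbar q j) ^ 2 + pbar q j ^ 2 := by
  simp only [pbar, pow_succ, pow_mul]
  ring

lemma sum_sum_negMulLog_Pq_mul_Pq_div (q t : ℝ) {m c : ℕ} (hc : c < 2) (hPib : Pib q m c ≠ 0) :
    ∑ e₁ ∈ parityClass (2 ^ m) c, ∑ e₂ ∈ parityClass (2 ^ m) c,
        negMulLog (Pq q e₁ * Pq q e₂ / t) =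
      negMulLog (Pib q m c ^ 2 / t) + Pib q m c ^ 2 / t * 2 * (Hcond q m c * log 2) := by
  rw [Hcond_mul_log_two]
  exact sum_sum_negMulLog_mul_div _ _ (sum_Pq_parityClass_eq_Pib q m hc) hPib t

/-- For `0 < q < 1` and `j ≥ 1`, the conditional entropy of an i.i.d. Bernoulli(q) vector of
length `2^j` given even parity satisfies
`H₀^j(q) = h(q̄_j(q)) + (1 − q̄_j(q))·2·H₀^{j−1}(q) + q̄_j(q)·2·H₁^{j−1}(q)`. -/
theorem Hcond_even_recursion (q : ℝ) (hq0 : 0 < q) (hq1 : q < 1) (j : ℕ) (hj : 1 ≤ j) :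
    Hcond q j 0 = binEnt (qbar q j) + (1 - qbar q j) * 2 * Hcond q (j - 1) 0
      + qbar q j * 2 * Hcond q (j - 1) 1 := by
  obtain ⟨m, rfl⟩ : ∃ m, j = m + 1 := ⟨j - 1, by omega⟩
  obtain ⟨hp0, hp1⟩ := pbar_mem_Ioo hq0 hq1 m
  have hPib0 : Pib q m 0 ≠ 0 := by simpa [Pib, sub_eq_zero] using hp1.ne'
  have hPib1 : Pib q m 1 ≠ 0 := by simpa [Pib] using hp0.ne'
  rw [Nat.add_sub_cancel]
  set t := Pib q (m + 1) 0 with ht_def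
  have ht : t = Pib q m 0 ^ 2 + Pib q m 1 ^ 2 := by simp [t, Pib, one_sub_pbar_succ]
  have ht0 : t ≠ 0 := by
    rw [ht]
    exact (add_pos_of_nonneg_of_pos (sq_nonneg _) (sq_pos_of_ne_zero hPib1)).ne'
  have hqbar : qbar q (m + 1) = Pib q m 1 ^ 2 / t := by simp [qbar, Pib, t]
  have hqbar' : 1 - qbar q (m + 1) = Pib q m 0 ^ 2 / t := by
    rw [hqbar, eq_div_iff ht0, sub_mul, div_mul_cancel₀ _ ht0, ht]
    ring
  have hsplit : Hcond q (m + 1) 0 * log 2 = ∑ c ∈ range 2, ∑ e₁ ∈ parityClass (2 ^ m) c,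
      ∑ e₂ ∈ parityClass (2 ^ m) c, negMulLog (Pq q e₁ * Pq q e₂ / t) := by
    rw [Hcond_mul_log_two, ← ht_def, show 2 ^ (m + 1) = 2 ^ m + 2 ^ m by ring]
    simp only [sum_parityClass_add_zero, Pq_append]
  apply mul_right_cancel₀ (log_pos one_lt_two).ne'
  rw [hsplit, sum_range_succ, sum_range_one, sum_sum_negMulLog_Pq_mul_Pq_div q t two_pos hPib0,
    sum_sum_negMulLog_Pq_mul_Pq_div q t one_lt_two hPib1, binEnt_eq, hqbar', hqbar]
  field_simp
  ring
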